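/- For each natural number M, and complex parameters a1, a2, b1 with s1 = b1 - a1 - a2, the expression Γ(a1+n)Γ(a2+n)/(Γ(b1+n)Γ(-s1+n)) minus the partial sum 1 + Σ_{m=1}^{M} (s1+a1)_m (s1+a2)_m / (m! (1+s1-n)_m) is O(n^{-M-1}) as n → ∞. -/

import Mathlib

/-!
Write `F n` for the Gamma ratio and `S n` for the partial sum. From `Γ(x + 1) = x Γ(x)`,
`(b1 + n)(n - s1) F(n + 1) = (a1 + n)(a2 + n) F n`. The partial sums satisfy the same recurrence
up to one telescoped term: `(a1 + n)(a2 + n) S n - (b1 + n)(n - s1) S(n + 1)` equals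
`(s1 + a1)_{M+1} (s1 + a2)_{M+1} / (M! (1 + s1 - n)_M) = O(n^{-M})`. Since `b1 = s1 + a1 + a2`,
the remainder `R = F - S` therefore satisfies `R n - R (n + 1) = O(n^{-2}) R n + O(n^{-M-2})`.
Both `F n` (Euler's limit formula for `Γ`) and `S n` tend to `1`, so `R n → 0`. Summing the
differences from `n` to `∞` turns a bound `R = O(n^{-j})` into `R = O(n^{-j-1})`, and `M + 1`
such steps give the claim.
-/

open Filter Asymptotics Finset Topology
open scoped Nat

theorem norm_le_of_norm_sub_succ_le {E : Type*} [SeminormedAddCommGroup E] {u : ℕ → E}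
    {v : ℕ → ℝ} {n : ℕ} (hu : Tendsto u atTop (𝓝 0)) (hv : Tendsto v atTop (𝓝 0))
    (h : ∀ k, n ≤ k → ‖u k - u (k + 1)‖ ≤ v k - v (k + 1)) : ‖u n‖ ≤ v n := by
  have partial_bound : ∀ N, n ≤ N → ‖u n‖ ≤ ‖u N‖ + (v n - v N) := by
    intro N hN
    induction N, hN using Nat.le_induction with
    | base => simp
    | succ N hnN ih => linarith [norm_le_norm_add_norm_sub' (u N) (u (N + 1)), h N hnN]
  have hlim : Tendsto (fun N => ‖u N‖ + (v n - v N)) atTop (𝓝 (v n)) := by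
    simpa using hu.norm.add (tendsto_const_nhds.sub hv)
  exact ge_of_tendsto hlim (eventually_atTop.2 ⟨n, partial_bound⟩)

theorem inv_pow_succ_le_two_mul_sub (p : ℕ) {x : ℝ} (hx : 1 ≤ x) :
    x⁻¹ ^ (p + 2) ≤ 2 * (x⁻¹ ^ (p + 1) - (x + 1)⁻¹ ^ (p + 1)) := by
  have hsub : x⁻¹ - (x + 1)⁻¹ = x⁻¹ * (x + 1)⁻¹ := by field_simp; ring
  set y := (x + 1)⁻¹
  have hy0 : 0 ≤ y := by positivity
  have hyx : y ≤ x⁻¹ := inv_anti₀ (by positivity) (by linarith)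
  have hxy : x⁻¹ ≤ 2 * y := by
    rw [← div_eq_mul_inv, ← one_div, div_le_div_iff₀ (by positivity) (by positivity)]; linarith
  have hpow : y ^ p ≤ x⁻¹ ^ p := pow_le_pow_left₀ hy0 hyx p
  calc x⁻¹ ^ (p + 2) = x⁻¹ ^ p * x⁻¹ * x⁻¹ := by ring
    _ ≤ x⁻¹ ^ p * x⁻¹ * (2 * y) := by gcongr
    _ = 2 * (x⁻¹ ^ (p + 1) - y * x⁻¹ ^ p) := by
      rw [pow_succ]; linear_combination (-2 * x⁻¹ ^ p) * hsub
    _ ≤ 2 * (x⁻¹ ^ (p + 1) - y ^ (p + 1)) := by rw [pow_succ' y]; gcongr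

theorem isBigO_inv_pow_succ_of_sub_succ {E : Type*} [SeminormedAddCommGroup E] {u : ℕ → E}
    (p : ℕ) (hu : Tendsto u atTop (𝓝 0))
    (hd : (fun n => u n - u (n + 1)) =O[atTop] fun n => (n : ℝ)⁻¹ ^ (p + 2)) :
    u =O[atTop] fun n => (n : ℝ)⁻¹ ^ (p + 1) := by
  obtain ⟨c, hc0, hc⟩ := hd.exists_pos
  obtain ⟨N, hN⟩ := eventually_atTop.1 (hc.bound.and (eventually_ge_atTop 1))
  have hv : Tendsto (fun k : ℕ => 2 * c * (k : ℝ)⁻¹ ^ (p + 1)) atTop (𝓝 0) := by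
    simpa using (tendsto_inv_atTop_zero.comp tendsto_natCast_atTop_atTop).pow (p + 1)
      |>.const_mul (2 * c)
  refine IsBigO.of_bound (2 * c) ?_
  filter_upwards [eventually_ge_atTop N] with n hn
  rw [Real.norm_of_nonneg (by positivity)]
  refine norm_le_of_norm_sub_succ_le hu hv fun k hk => ?_
  obtain ⟨hck, hk1⟩ := hN k (hn.trans hk)
  rw [Real.norm_of_nonneg (by positivity)] at hck
  have := inv_pow_succ_le_two_mul_sub p (x := k) (by exact_mod_cast hk1)
  push_cast
  linarith [mul_le_mul_of_nonneg_left this hc0.le]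

theorem isBigO_inv_pow_of_le {a b : ℕ} (h : b ≤ a) :
    (fun n : ℕ => (n : ℝ)⁻¹ ^ a) =O[atTop] fun n => (n : ℝ)⁻¹ ^ b := by
  refine IsBigO.of_bound 1 ?_
  filter_upwards [eventually_ge_atTop 1] with n hn
  have : (n : ℝ)⁻¹ ≤ 1 := inv_le_one_of_one_le₀ (by exact_mod_cast hn)
  rw [one_mul, Real.norm_of_nonneg (by positivity), Real.norm_of_nonneg (by positivity)]
  exact pow_le_pow_of_le_one (by positivity) this h

theorem isBigO_inv_pow_of_sub_succ_eq_mul_add {𝕜 : Type*} [NormedField 𝕜] {R α β : ℕ → 𝕜} (M : ℕ)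
    (hR : Tendsto R atTop (𝓝 0)) (hα : α =O[atTop] fun n => (n : ℝ)⁻¹ ^ 2)
    (hβ : β =O[atTop] fun n => (n : ℝ)⁻¹ ^ (M + 2))
    (hrec : ∀ᶠ n in atTop, R n - R (n + 1) = α n * R n + β n) :
    R =O[atTop] fun n => (n : ℝ)⁻¹ ^ (M + 1) := by
  suffices ∀ j ≤ M + 1, R =O[atTop] fun n => (n : ℝ)⁻¹ ^ j from this _ le_rfl
  intro j
  induction j with
  | zero => intro _; simpa using hR.isBigO_one ℝ
  | succ j ih =>
    intro hj
    refine isBigO_inv_pow_succ_of_sub_succ j hR (IsBigO.congr' ?_ (hrec.mono fun n h => h.symm)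
      EventuallyEq.rfl)
    refine IsBigO.add ?_ (hβ.trans (isBigO_inv_pow_of_le (by omega)))
    simpa only [← pow_add, add_comm 2] using hα.mul (ih (by omega))

theorem ascPochhammer_eval_eq_prod_range {S : Type*} [CommSemiring S] (n : ℕ) (r : S) :
    (ascPochhammer S n).eval r = ∏ j ∈ range n, (r + j) := by
  induction n with
  | zero => simp
  | succ n ih => rw [ascPochhammer_succ_eval, ih, prod_range_succ]

namespace Complex

theorem eventually_add_natCast_ne_neg_natCast (c : ℂ) :
    ∀ᶠ n : ℕ in atTop, ∀ k : ℕ, c + n ≠ -k := by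
  filter_upwards [tendsto_natCast_atTop_atTop.eventually_gt_atTop (-c.re)] with n hn k hk
  have := congrArg re hk
  simp only [add_re, natCast_re, neg_re] at this
  linarith [(k.cast_nonneg : (0 : ℝ) ≤ k)]

theorem Gamma_add_nat_add_one_div_eq_div_GammaSeq {z : ℂ} (hz : ∀ k : ℕ, z ≠ -k) (n : ℕ) :
    Gamma (z + n + 1) / ((n : ℂ) ^ z * n !) = Gamma z / GammaSeq z n := by
  rw [GammaSeq, div_div_eq_mul_div, ← ascPochhammer_eval_eq_prod_range,
    ← Gamma_add_nat_div_Gamma_eq z hz, mul_div_cancel₀ _ (Gamma_ne_zero hz)]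
  push_cast
  ring_nf

theorem tendsto_Gamma_add_nat_add_one_div {z : ℂ} (hz : ∀ k : ℕ, z ≠ -k) :
    Tendsto (fun n : ℕ => Gamma (z + n + 1) / ((n : ℂ) ^ z * n !)) atTop (𝓝 1) := by
  simp_rw [Gamma_add_nat_add_one_div_eq_div_GammaSeq hz]
  have := (tendsto_const_nhds (x := Gamma z)).div (GammaSeq_tendsto_Gamma z) (Gamma_ne_zero hz)
  rwa [div_self (Gamma_ne_zero hz)] at this

end Complex

noncomputable def gammaRatio (a b c d : ℂ) (n : ℕ) : ℂ :=
  Complex.Gamma (a + n) * Complex.Gamma (b + n) / (Complex.Gamma (c + n) * Complex.Gamma (d + n))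

theorem gammaRatio_succ_mul {a b c d : ℂ} {n : ℕ} (ha : a + n ≠ 0) (hb : b + n ≠ 0)
    (hc : c + n ≠ 0) (hd : d + n ≠ 0) :
    gammaRatio a b c d (n + 1) * ((c + n) * (d + n)) =
      (a + n) * (b + n) * gammaRatio a b c d n := by
  simp only [gammaRatio, Nat.cast_succ, ← add_assoc, Complex.Gamma_add_one _ ha,
    Complex.Gamma_add_one _ hb, Complex.Gamma_add_one _ hc, Complex.Gamma_add_one _ hd]
  field_simp

theorem tendsto_gammaRatio {a b c d : ℂ} (h : a + b = c + d) :
    Tendsto (gammaRatio a b c d) atTop (𝓝 1) := by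
  -- After a shift by `N` no parameter is a pole of `Γ`, Euler's limit applies to each factor,
  -- and the powers `n ^ x` cancel because `a + b = c + d`.
  obtain ⟨N, ha, hb, hc, hd⟩ := ((Complex.eventually_add_natCast_ne_neg_natCast (a - 1)).and <|
    (Complex.eventually_add_natCast_ne_neg_natCast (b - 1)).and <|
    (Complex.eventually_add_natCast_ne_neg_natCast (c - 1)).and <|
    Complex.eventually_add_natCast_ne_neg_natCast (d - 1)).exists
  rw [← tendsto_add_atTop_iff_nat N]
  set Q : ℂ → ℕ → ℂ := fun x n =>
    Complex.Gamma (x - 1 + N + n + 1) / ((n : ℂ) ^ (x - 1 + N) * n !)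
  have hQ := ((Complex.tendsto_Gamma_add_nat_add_one_div ha).mul
    (Complex.tendsto_Gamma_add_nat_add_one_div hb)).div
    ((Complex.tendsto_Gamma_add_nat_add_one_div hc).mul
    (Complex.tendsto_Gamma_add_nat_add_one_div hd)) (by norm_num)
  rw [mul_one, div_one] at hQ
  refine hQ.congr' ?_
  filter_upwards [eventually_ne_atTop 0] with n hn
  show Q a n * Q b n / (Q c n * Q d n) = _
  have hn' : (n : ℂ) ≠ 0 := Nat.cast_ne_zero.2 hn
  have hP : ∀ x : ℂ, (n : ℂ) ^ x * n ! ≠ 0 := fun x =>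
    mul_ne_zero (Complex.cpow_ne_zero_iff.2 (Or.inl hn')) (Nat.cast_ne_zero.2 n.factorial_ne_zero)
  have hΓ : ∀ x : ℂ, Complex.Gamma (x + ↑(n + N)) = Q x n * ((n : ℂ) ^ (x - 1 + N) * n !) :=
    fun x => by rw [div_mul_cancel₀ _ (hP _)]; congr 1; push_cast; ring
  have hPP : (n : ℂ) ^ (a - 1 + N) * n ! * ((n : ℂ) ^ (b - 1 + N) * n !) =
      (n : ℂ) ^ (c - 1 + N) * n ! * ((n : ℂ) ^ (d - 1 + N) * n !) := by
    rw [mul_mul_mul_comm, ← Complex.cpow_add _ _ hn', mul_mul_mul_comm _ (n ! : ℂ),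
      ← Complex.cpow_add _ _ hn',
      show a - 1 + N + (b - 1 + N) = c - 1 + N + (d - 1 + N) by linear_combination h]
  rw [gammaRatio, hΓ a, hΓ b, hΓ c, hΓ d, mul_mul_mul_comm (Q a n), mul_mul_mul_comm (Q c n), hPP,
    mul_div_mul_right _ _ (mul_ne_zero (hP _) (hP _))]

section Hypergeom

variable {𝕜 : Type*} [Field 𝕜]

noncomputable def hypergeomTerm (α β z : 𝕜) (m : ℕ) : 𝕜 :=
  (ascPochhammer 𝕜 m).eval α * (ascPochhammer 𝕜 m).eval β / (m ! * (ascPochhammer 𝕜 m).eval z)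

noncomputable def hypergeomSum (α β z : 𝕜) (M : ℕ) : 𝕜 :=
  1 + ∑ m ∈ Icc 1 M, hypergeomTerm α β z m

theorem hypergeomSum_zero (α β z : 𝕜) : hypergeomSum α β z 0 = 1 := by simp [hypergeomSum]

theorem hypergeomSum_succ (α β z : 𝕜) (M : ℕ) :
    hypergeomSum α β z (M + 1) = hypergeomSum α β z M + hypergeomTerm α β z (M + 1) := by
  rw [hypergeomSum, hypergeomSum, sum_Icc_succ_top (by omega), add_assoc]

variable [CharZero 𝕜]

theorem hypergeomTerm_succ_recurrence {α β z : 𝕜} {M : ℕ}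
    (hz : (ascPochhammer 𝕜 (M + 1)).eval z ≠ 0) (hz1 : z ≠ 1) :
    (α + 1 - z) * (β + 1 - z) * hypergeomTerm α β z (M + 1) -
        (α + β + 1 - z) * (1 - z) * hypergeomTerm α β (z - 1) (M + 1) =
      (ascPochhammer 𝕜 (M + 2)).eval α * (ascPochhammer 𝕜 (M + 2)).eval β /
          ((M + 1)! * (ascPochhammer 𝕜 (M + 1)).eval z) -
        (ascPochhammer 𝕜 (M + 1)).eval α * (ascPochhammer 𝕜 (M + 1)).eval β /
          (M ! * (ascPochhammer 𝕜 M).eval z) := by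
  have hα : (ascPochhammer 𝕜 (M + 2)).eval α = (ascPochhammer 𝕜 (M + 1)).eval α * (α + M + 1) := by
    rw [ascPochhammer_succ_eval]; push_cast; ring
  have hβ : (ascPochhammer 𝕜 (M + 2)).eval β = (ascPochhammer 𝕜 (M + 1)).eval β * (β + M + 1) := by
    rw [ascPochhammer_succ_eval]; push_cast; ring
  have hshift :
      (ascPochhammer 𝕜 (M + 1)).eval (z - 1) = (z - 1) * (ascPochhammer 𝕜 M).eval z := by
    simp [ascPochhammer_succ_left]
  rw [ascPochhammer_succ_eval M z] at hz
  obtain ⟨hzM, hzM'⟩ := mul_ne_zero_iff.1 hz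
  have hz1' : z - 1 ≠ 0 := sub_ne_zero.2 hz1
  have hM : (M + 1 : 𝕜) ≠ 0 := by exact_mod_cast M.succ_ne_zero
  rw [hypergeomTerm, hypergeomTerm, hshift, ascPochhammer_succ_eval M z, hα, hβ,
    Nat.factorial_succ, Nat.cast_mul]
  field_simp
  push_cast
  ring

theorem hypergeomSum_recurrence {α β z : 𝕜} {M : ℕ} (hz : (ascPochhammer 𝕜 M).eval z ≠ 0)
    (hz1 : z ≠ 1) :
    (α + 1 - z) * (β + 1 - z) * hypergeomSum α β z M -
        (α + β + 1 - z) * (1 - z) * hypergeomSum α β (z - 1) M =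
      (ascPochhammer 𝕜 (M + 1)).eval α * (ascPochhammer 𝕜 (M + 1)).eval β /
        (M ! * (ascPochhammer 𝕜 M).eval z) := by
  induction M with
  | zero => simp [hypergeomSum_zero]; ring
  | succ M ih =>
    have hzM : (ascPochhammer 𝕜 M).eval z ≠ 0 := by
      rw [ascPochhammer_succ_eval] at hz; exact left_ne_zero_of_mul hz
    rw [hypergeomSum_succ, hypergeomSum_succ]
    linear_combination ih hzM + hypergeomTerm_succ_recurrence (α := α) (β := β) hz hz1

end Hypergeom

theorem isBigO_inv_add_natCast (c : ℂ) :
    (fun n : ℕ => (c + n)⁻¹) =O[atTop] fun n => (n : ℝ)⁻¹ := by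
  have hequiv : (fun n : ℕ => c + n) ~[atTop] fun n => (n : ℂ) := by
    have hsub : ((fun n : ℕ => c + n) - fun n : ℕ => (n : ℂ)) = fun _ => c := by funext n; simp
    rw [IsEquivalent, hsub]
    exact isLittleO_const_left.2 <| Or.inr <| by
      simpa [Function.comp_def] using tendsto_natCast_atTop_atTop (R := ℝ)
  refine hequiv.inv.isBigO.trans (IsBigO.of_bound 1 ?_)
  simp

theorem isBigO_inv_mul_add_natCast (b c : ℂ) :
    (fun n : ℕ => ((b + n) * (c + n))⁻¹) =O[atTop] fun n => (n : ℝ)⁻¹ ^ 2 := by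
  simpa only [mul_inv, sq] using (isBigO_inv_add_natCast b).mul (isBigO_inv_add_natCast c)

theorem isBigO_inv_ascPochhammer_eval_sub_natCast (c : ℂ) (m : ℕ) :
    (fun n : ℕ => ((ascPochhammer ℂ m).eval (c - n))⁻¹) =O[atTop] fun n => (n : ℝ)⁻¹ ^ m := by
  induction m with
  | zero => simpa using isBigO_refl (fun _ : ℕ => (1 : ℝ)) atTop
  | succ m ih =>
    have hfactor : (fun n : ℕ => (c - n + m)⁻¹) =O[atTop] fun n => (n : ℝ)⁻¹ := by
      refine (isBigO_inv_add_natCast (-(c + m))).neg_left.congr_left fun n => ?_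
      rw [← inv_neg]; ring
    simpa only [ascPochhammer_succ_eval, mul_inv, pow_succ] using ih.mul hfactor

theorem eventually_ascPochhammer_eval_sub_natCast_ne_zero (c : ℂ) (m : ℕ) :
    ∀ᶠ n : ℕ in atTop, (ascPochhammer ℂ m).eval (c - n) ≠ 0 := by
  filter_upwards [tendsto_natCast_atTop_atTop.eventually_gt_atTop (c.re + m)] with n hn
  rw [Ne, ascPochhammer_eval_eq_zero_iff]
  rintro ⟨k, hk, hkc⟩
  have := congrArg Complex.re hkc
  simp only [Complex.natCast_re, Complex.neg_re, Complex.sub_re] at this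
  linarith [(Nat.cast_lt (α := ℝ)).2 hk]

theorem tendsto_hypergeomSum_sub_natCast (α β c : ℂ) (M : ℕ) :
    Tendsto (fun n : ℕ => hypergeomSum α β (c - n) M) atTop (𝓝 1) := by
  have hterm : ∀ m ∈ Icc 1 M,
      Tendsto (fun n : ℕ => hypergeomTerm α β (c - n) m) atTop (𝓝 0) := by
    intro m hm
    have hm0 : m ≠ 0 := by rw [mem_Icc] at hm; omega
    refine (((isBigO_inv_ascPochhammer_eval_sub_natCast c m).const_mul_left
      ((ascPochhammer ℂ m).eval α * (ascPochhammer ℂ m).eval β / m !)).congr_left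
      fun n => ?_).trans_tendsto ?_
    · rw [hypergeomTerm]; ring
    · simpa only [Function.comp_def, zero_pow hm0] using
        (tendsto_inv_atTop_zero.comp (tendsto_natCast_atTop_atTop (R := ℝ))).pow m
  simpa only [hypergeomSum, sum_const_zero, add_zero] using
    (tendsto_finsetSum _ hterm).const_add 1

noncomputable def dingleRemainder (a1 a2 b1 s1 : ℂ) (M n : ℕ) : ℂ :=
  gammaRatio a1 a2 b1 (-s1) n - hypergeomSum (s1 + a1) (s1 + a2) (1 + s1 - n) M

theorem dingleRemainder_sub_succ {a1 a2 b1 s1 : ℂ} (M : ℕ) (hs : s1 = b1 - a1 - a2) :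
    ∀ᶠ n : ℕ in atTop, dingleRemainder a1 a2 b1 s1 M n - dingleRemainder a1 a2 b1 s1 M (n + 1) =
      -((s1 + a1) * (s1 + a2)) * ((b1 + n) * (-s1 + n))⁻¹ * dingleRemainder a1 a2 b1 s1 M n +
      -((ascPochhammer ℂ (M + 1)).eval (s1 + a1) * (ascPochhammer ℂ (M + 1)).eval (s1 + a2) / M !) *
        (((ascPochhammer ℂ M).eval (1 + s1 - n))⁻¹ * ((b1 + n) * (-s1 + n))⁻¹) := by
  obtain rfl : b1 = s1 + a1 + a2 := by rw [hs]; ring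
  filter_upwards [Complex.eventually_add_natCast_ne_neg_natCast a1,
    Complex.eventually_add_natCast_ne_neg_natCast a2,
    Complex.eventually_add_natCast_ne_neg_natCast (s1 + a1 + a2),
    Complex.eventually_add_natCast_ne_neg_natCast (-s1),
    eventually_ascPochhammer_eval_sub_natCast_ne_zero (1 + s1) M] with n ha1 ha2 hb1 hs1 hP
  have hne : ∀ x : ℂ, (∀ k : ℕ, x + n ≠ -k) → x + n ≠ 0 := fun x hx => by simpa using hx 0
  have hratio := gammaRatio_succ_mul (hne _ ha1) (hne _ ha2) (hne _ hb1) (hne _ hs1)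
  have hsum := hypergeomSum_recurrence (α := s1 + a1) (β := s1 + a2) hP
    (fun h => hne _ hs1 (by linear_combination -h))
  have hz : (1 + s1 - ((n + 1 : ℕ) : ℂ)) = 1 + s1 - n - 1 := by push_cast; ring
  have hq := mul_ne_zero (hne _ hb1) (hne _ hs1)
  -- `b1 = s1 + a1 + a2` enters through `(b1 + n)(n - s1) - (a1 + n)(a2 + n) = -(s1 + a1)(s1 + a2)`.
  have key : ((s1 + a1 + a2 + n) * (-s1 + n)) *
      (dingleRemainder a1 a2 (s1 + a1 + a2) s1 M n -
        dingleRemainder a1 a2 (s1 + a1 + a2) s1 M (n + 1)) =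
      -((s1 + a1) * (s1 + a2)) * dingleRemainder a1 a2 (s1 + a1 + a2) s1 M n -
        (ascPochhammer ℂ (M + 1)).eval (s1 + a1) * (ascPochhammer ℂ (M + 1)).eval (s1 + a2) /
          (M ! * (ascPochhammer ℂ M).eval (1 + s1 - n)) := by
    simp only [dingleRemainder, hz]
    linear_combination -hratio - hsum
  rw [← mul_right_inj' hq, key]
  generalize (s1 + a1 + a2 + n) * (-s1 + n) = q at hq
  field_simp
  ring

theorem dingle_expansion (M : ℕ) (a1 a2 b1 s1 : ℂ) (hs : s1 = b1 - a1 - a2) :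
    (fun n : ℕ =>
        Complex.Gamma (a1 + n) * Complex.Gamma (a2 + n) /
            (Complex.Gamma (b1 + n) * Complex.Gamma (-s1 + n)) -
          (1 + ∑ m ∈ Icc 1 M,
              (ascPochhammer ℂ m).eval (s1 + a1) * (ascPochhammer ℂ m).eval (s1 + a2) /
                ((m.factorial : ℂ) * (ascPochhammer ℂ m).eval (1 + s1 - n)))) =O[atTop]
      fun n : ℕ => ((n : ℝ))⁻¹ ^ (M + 1) := by
  change dingleRemainder a1 a2 b1 s1 M =O[atTop] _
  refine isBigO_inv_pow_of_sub_succ_eq_mul_add M ?_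
    ((isBigO_inv_mul_add_natCast b1 (-s1)).const_mul_left _) ?_ (dingleRemainder_sub_succ M hs)
  · have hlim := (tendsto_gammaRatio (a := a1) (b := a2) (c := b1) (d := -s1)
      (by linear_combination hs)).sub
      (tendsto_hypergeomSum_sub_natCast (s1 + a1) (s1 + a2) (1 + s1) M)
    rw [sub_self] at hlim
    exact hlim
  · simpa only [← pow_add] using ((isBigO_inv_ascPochhammer_eval_sub_natCast (1 + s1) M).mul
      (isBigO_inv_mul_add_natCast b1 (-s1))).const_mul_left _
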